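/- In a perfect k-colored matching, every block of k consecutive vertices has an outdegree sequence of the form (0,...,0,1,...,1): no vertex with an incoming edge appears after a vertex with an outgoing edge within a block. -/

import Mathlib

/-- A plane (non-crossing) perfect matching on the `2n` points `0, …, 2n-1`
in convex position. -/
structure NCMatching (n : ℕ) where
  pairs : Finset (ℕ × ℕ)
  mem_lt : ∀ p ∈ pairs, p.1 < p.2 ∧ p.2 < 2 * n
  covers : ∀ v, v < 2 * n → ∃! p, p ∈ pairs ∧ (p.1 = v ∨ p.2 = v)
  noncross : ∀ p ∈ pairs, ∀ q ∈ pairs, ¬ (p.1 < q.1 ∧ q.1 < p.2 ∧ p.2 < q.2)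

/-- Outdegree of vertex `v` (1 if `v` is matched to a larger vertex, else 0). -/
def NCMatching.out {n : ℕ} (M : NCMatching n) (v : ℕ) : ℕ :=
  (M.pairs.filter fun p => p.1 = v).card

/-- The outdegree sequence `(b_1, …, b_{2n})` of a matching. -/
def NCMatching.outList {n : ℕ} (M : NCMatching n) : List ℕ :=
  (List.range (2 * n)).map M.out

/-- A triangulation of the convex polygon with vertices `0, …, n+1` in convex
position: a maximal set of pairwise non-crossing diagonals (`n-1` many). -/
structure Triangulation (n : ℕ) where
  diag : Finset (ℕ × ℕ)
  isDiag : ∀ e ∈ diag, e.1 + 2 ≤ e.2 ∧ e.2 ≤ n + 1 ∧ ¬(e.1 = 0 ∧ e.2 = n + 1)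
  noncross : ∀ e ∈ diag, ∀ f ∈ diag, ¬ (e.1 < f.1 ∧ f.1 < e.2 ∧ e.2 < f.2)
  card_diag : diag.card = n - 1

/-- Outdegree of point `i` in a triangulation: edges are directed from lower to
higher index; hull edges are not counted, except `p_1 p_{n+2}` (counted at `0`). -/
def Triangulation.out {n : ℕ} (T : Triangulation n) (i : ℕ) : ℕ :=
  (T.diag.filter fun e => e.1 = i).card + (if i = 0 then 1 else 0)

/-- The outdegree sequence `(d_1, …, d_n)` of a triangulation. -/
def Triangulation.outList {n : ℕ} (T : Triangulation n) : List ℕ :=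
  (List.range n).map T.out

/-- Ballot sequences of length `2n`: 0/1 sequences with `n` ones whose every
prefix has at least as many ones as zeros. -/
def IsBallot (n : ℕ) (l : List ℕ) : Prop :=
  l.length = 2 * n ∧ (∀ x ∈ l, x = 0 ∨ x = 1) ∧ l.sum = n ∧
    ∀ m, m ≤ 2 * n → m ≤ 2 * (l.take m).sum

/-- Valid outdegree sequences of triangulations of a convex `(n+2)`-gon. -/
def IsTriDeg (n : ℕ) (d : List ℕ) : Prop :=
  d.length = n ∧ d.sum = n ∧ ∀ l, l ≤ n → (d.reverse.take l).sum ≤ l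

/-- From a degree sequence `(d_1,…,d_n)` to the ballot sequence consisting of
`d_i` ones followed by a zero, for each `i`. -/
def degToBallot (d : List ℕ) : List ℕ :=
  (d.map fun x => List.replicate x 1 ++ [0]).flatten

/-- From a ballot sequence `B` to the sequence `(d_1,…,d_n)` where `d_i` is the
number of ones between the `(i-1)`-st and the `i`-th zero of `B`. -/
def ballotToDeg (B : List ℕ) : List ℕ :=
  ((B.splitOn 0).map List.length).dropLast

/-- The bitonic `k`-coloring `c_1,…,c_k,c_k,…,c_1,c_1,…` of the vertices. -/
def bitColor (k i : ℕ) : ℕ :=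
  if (i / k) % 2 = 0 then i % k else k - 1 - i % k

/-- A perfect `k`-colored (monochromatic) matching: every edge joins two
vertices of the same color. -/
def Mono (k : ℕ) {n : ℕ} (M : NCMatching n) : Prop :=
  ∀ p ∈ M.pairs, bitColor k p.1 = bitColor k p.2

/-- Valid block structure: within each block of `k` consecutive vertices, every
vertex with an outgoing edge is followed only by vertices with outgoing edges. -/
def ValidBlock (k : ℕ) {n : ℕ} (M : NCMatching n) : Prop :=
  ∀ u v, v < 2 * n → u / k = v / k → u < v → M.out u = 1 → M.out v = 1

/-- The hull edges of the convex polygon on `0, …, n+1`. -/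
def hullEdges (n : ℕ) : Finset (ℕ × ℕ) :=
  ((Finset.range (n + 1)).image fun i => (i, i + 1)) ∪ {(0, n + 1)}

/-- The edges of the face with vertex set `S` (in convex position): consecutive
pairs of `S` together with the pair `(min S, max S)`. -/
def faceEdges (S : Finset ℕ) : Finset (ℕ × ℕ) :=
  (S ×ˢ S).filter fun p => p.1 < p.2 ∧
    ((∀ c ∈ S, ¬ (p.1 < c ∧ c < p.2)) ∨ (∀ c ∈ S, p.1 ≤ c ∧ c ≤ p.2))

/-- A `t`-gonal tiling of the convex polygon on the points `0, …, n+1`: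
a plane graph all of whose bounded faces are `t`-gons, given by its set of
(bounded) faces. -/
structure Tiling (t n : ℕ) where
  faces : Finset (Finset ℕ)
  sub : ∀ S ∈ faces, S ⊆ Finset.range (n + 2)
  size : ∀ S ∈ faces, S.card = t
  noncross : ∀ S ∈ faces, ∀ S' ∈ faces, ∀ e ∈ faceEdges S, ∀ e' ∈ faceEdges S',
      ¬ (e.1 < e'.1 ∧ e'.1 < e.2 ∧ e.2 < e'.2)
  share : ∀ S ∈ faces, ∀ S' ∈ faces, S ≠ S' → (S ∩ S').card ≤ 2
  boundary : ∀ e ∈ hullEdges n, (faces.filter fun S => e ∈ faceEdges S).card = 1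
  interior : ∀ S ∈ faces, ∀ e ∈ faceEdges S, e ∉ hullEdges n →
      (faces.filter fun S' => e ∈ faceEdges S').card = 2

/-- The dual graph of a tiling: one vertex per bounded face, two faces adjacent
iff they share a common edge. -/
def dualGraph {t n : ℕ} (T : Tiling t n) : SimpleGraph {S // S ∈ T.faces} where
  Adj A B := A ≠ B ∧ (faceEdges A.1 ∩ faceEdges B.1).Nonempty
  symm := by
    refine ⟨?_⟩
    rintro A B ⟨h1, h2⟩
    exact ⟨Ne.symm h1, by rwa [Finset.inter_comm]⟩
  loopless := by refine ⟨?_⟩; rintro A ⟨h, -⟩; exact h rfl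

/-- An ear of a tiling: a face all but one of whose edges lie on the hull. -/
def IsEar {t n : ℕ} (T : Tiling t n) (S : Finset ℕ) : Prop :=
  S ∈ T.faces ∧ (faceEdges S \ hullEdges n).card = 1

/-- A tiling is a subgraph of a triangulation if each of its non-hull edges is
a diagonal of the triangulation. -/
def SubTri {t n : ℕ} (T : Tiling t n) (𝒯 : Triangulation n) : Prop :=
  ∀ S ∈ T.faces, ∀ e ∈ faceEdges S, e ∉ hullEdges n → e ∈ 𝒯.diag

/-- A triangulation is `k`-color valid if, under the outdegree-sequence
bijection, it corresponds to a perfect `k`-colored matching. -/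
def KColorValidTri (k : ℕ) {n : ℕ} (𝒯 : Triangulation n) : Prop :=
  ∃ M : NCMatching n, Mono k M ∧ M.outList = degToBallot 𝒯.outList

/-- A `(k+2)`-gonal tiling is `k`-color valid if it is a subgraph of some
`k`-color valid triangulation. -/
def KColorValidTiling (k : ℕ) {n : ℕ} (T : Tiling (k + 2) n) : Prop :=
  ∃ 𝒯 : Triangulation n, KColorValidTri k 𝒯 ∧ SubTri T 𝒯

/-! Inside a block the bitonic coloring is injective, so every edge of a monochromatic matching
leaves the block of each of its endpoints. If `u < v` lie in one block, `u` has an outgoing edge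
`(u, u')` and `v` an incoming edge `(w, v)`, then `w` precedes the block and `u'` follows it,
so `w < u < v < u'` and the two edges cross. -/

lemma eq_of_bitColor_eq_of_div_eq {k a b : ℕ} (hdiv : a / k = b / k)
    (hc : bitColor k a = bitColor k b) : a = b := by
  rcases Nat.eq_zero_or_pos k with rfl | hk
  · simpa [bitColor] using hc
  have hmod : a % k = b % k := by
    unfold bitColor at hc
    rw [hdiv] at hc
    have := Nat.mod_lt a hk
    have := Nat.mod_lt b hk
    split at hc <;> omega
  rw [← Nat.div_add_mod a k, ← Nat.div_add_mod b k, hdiv, hmod]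

namespace NCMatching

variable {n : ℕ} (M : NCMatching n)

lemma exists_mem_of_lt {v : ℕ} (hv : v < 2 * n) : ∃ p ∈ M.pairs, p.1 = v ∨ p.2 = v :=
  (M.covers v hv).exists.imp fun _ h => ⟨h.1, h.2⟩

lemma out_eq_one_iff {v : ℕ} (hv : v < 2 * n) : M.out v = 1 ↔ ∃ p ∈ M.pairs, p.1 = v := by
  obtain ⟨_, _, huniq⟩ := M.covers v hv
  simp only [NCMatching.out, Finset.card_eq_one, Finset.eq_singleton_iff_unique_mem,
    Finset.mem_filter]
  constructor
  · rintro ⟨p, hp, -⟩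
    exact ⟨p, hp⟩
  · rintro ⟨p, hp, hpv⟩
    exact ⟨p, ⟨hp, hpv⟩, fun r hr =>
      (huniq r ⟨hr.1, Or.inl hr.2⟩).trans (huniq p ⟨hp, Or.inl hpv⟩).symm⟩

end NCMatching

lemma Mono.fst_div_lt_snd_div {k n : ℕ} {M : NCMatching n} (hM : Mono k M) {p : ℕ × ℕ}
    (hp : p ∈ M.pairs) : p.1 / k < p.2 / k := by
  have hlt := (M.mem_lt p hp).1
  refine (Nat.div_le_div_right hlt.le).lt_of_ne fun hdiv => hlt.ne ?_
  exact eq_of_bitColor_eq_of_div_eq hdiv (hM p hp)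

theorem stmt12_general (k n : ℕ) (M : NCMatching n)
    (hM : Mono k M) : ValidBlock k M := by
  intro u v hv hblock huv hu
  obtain ⟨q, hq, rfl⟩ := (M.out_eq_one_iff (huv.trans hv)).1 hu
  obtain ⟨p, hp, hpv | hpv⟩ := M.exists_mem_of_lt hv
  · exact (M.out_eq_one_iff hv).2 ⟨p, hp, hpv⟩
  · subst hpv
    have hpq : p.1 < q.1 := Nat.lt_of_div_lt_div (hblock ▸ hM.fst_div_lt_snd_div hp)
    have hqp : p.2 < q.2 := Nat.lt_of_div_lt_div (hblock ▸ hM.fst_div_lt_snd_div hq)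
    exact absurd ⟨hpq, huv, hqp⟩ (M.noncross p hp q hq)

/-- In a perfect `k`-colored matching, every block of `k` consecutive vertices
has outdegree sequence of the form `(0,…,0,1,…,1)`. -/
theorem stmt12 (k n : ℕ) (hk : 2 ≤ k) (hdvd : k ∣ n) (M : NCMatching n)
    (hM : Mono k M) : ValidBlock k M :=
  stmt12_general k n M hM
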